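/- arXiv:2311.15461 — 2 statements merged into one kernel-verified Lean document; each statement's English description precedes it below -/
import Mathlib

section
/- Let K0 ∈ ℝ, δ > 0, let G : [K0, K0 + δ] → ℝ be continuous, let c ∈ ℝ and ε > 0, and let K : {z ∈ ℂ : 0 < |z| < ε} → (K0, K0 + δ) be a function satisfying ln(K(z) - K0) + G(K(z)) = ln(|z|^2) + c for all z with 0 < |z| < ε. Then K(z) → K0 as z → 0, and (K(z) - K0)/|z|^2 → exp(c - G(K0)) as z → 0; in particular this limit is a strictly positive real number. -/
/-!
Exponentiating the implicit equation gives `K z - K0 = |z|² · exp (c - G (K z))`. Since `G` is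
bounded below on the compact interval, this forces `K z - K0 = O(|z|²)`, so `K z → K0`; then
`G (K z) → G K0` by continuity, and the ratio `(K z - K0) / |z|² = exp (c - G (K z))` converges
to `exp (c - G K0)`.
-/

open Filter Topology Set

theorem Real.eq_mul_exp_sub_of_log_add_eq {x y a b : ℝ} (hx : 0 < x) (hy : 0 < y)
    (h : Real.log x + a = Real.log y + b) : x = y * Real.exp (b - a) := by
  calc x = Real.exp (Real.log y + (b - a)) := by rw [← Real.exp_log hx]; congr 1; linarith
    _ = y * Real.exp (b - a) := by rw [Real.exp_add, Real.exp_log hy]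

section ImplicitAsymptotics

variable {α : Type*} {l : Filter α} {G : ℝ → ℝ} {K u : α → ℝ} {a b c : ℝ}

theorem tendsto_of_sub_eq_mul_exp (hG : ContinuousOn G (Icc a b)) (hu : Tendsto u l (𝓝 0))
    (hK : ∀ᶠ x in l, K x ∈ Icc a b)
    (hrel : ∀ᶠ x in l, K x - a = u x * Real.exp (c - G (K x))) :
    Tendsto K l (𝓝 a) := by
  obtain ⟨m, hm⟩ := isCompact_Icc.bddBelow_image hG
  have hbound : ∀ᶠ x in l, ‖K x - a‖ ≤ Real.exp (c - m) * ‖u x‖ := by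
    filter_upwards [hK, hrel] with x hKx hx
    have hGm : m ≤ G (K x) := hm (mem_image_of_mem G hKx)
    rw [hx, norm_mul, Real.norm_of_nonneg (Real.exp_pos _).le, mul_comm]
    gcongr
  have hlim : Tendsto (fun x => Real.exp (c - m) * ‖u x‖) l (𝓝 0) := by
    simpa using hu.norm.const_mul (Real.exp (c - m))
  simpa using (squeeze_zero_norm' hbound hlim).add_const a

theorem tendsto_sub_div_of_sub_eq_mul_exp [l.NeBot] (hG : ContinuousOn G (Icc a b))
    (hu : Tendsto u l (𝓝 0)) (hu₀ : ∀ᶠ x in l, u x ≠ 0) (hK : ∀ᶠ x in l, K x ∈ Icc a b)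
    (hrel : ∀ᶠ x in l, K x - a = u x * Real.exp (c - G (K x))) :
    Tendsto (fun x => (K x - a) / u x) l (𝓝 (Real.exp (c - G a))) := by
  have hKa : Tendsto K l (𝓝 a) := tendsto_of_sub_eq_mul_exp hG hu hK hrel
  have ha : a ∈ Icc a b := isClosed_Icc.mem_of_tendsto hKa hK
  have hGK : Tendsto (fun x => G (K x)) l (𝓝 (G a)) :=
    (hG a ha).tendsto.comp (tendsto_nhdsWithin_iff.2 ⟨hKa, hK⟩)
  refine ((Real.continuous_exp.tendsto _).comp (tendsto_const_nhds.sub hGK)).congr' ?_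
  filter_upwards [hu₀, hrel] with x hx hrelx
  rw [hrelx, mul_div_cancel_left₀ _ hx]
  rfl

end ImplicitAsymptotics

theorem exceptional_germ_fifth_invariant_exists_general (K0 δ : ℝ)
    (G : ℝ → ℝ) (hG : ContinuousOn G (Set.Icc K0 (K0 + δ)))
    (c : ℝ) (ε : ℝ) (hε : 0 < ε) (K : ℂ → ℝ)
    (hmem : ∀ z : ℂ, 0 < ‖z‖ → ‖z‖ < ε →
      K z ∈ Set.Ioo K0 (K0 + δ))
    (heq : ∀ z : ℂ, 0 < ‖z‖ → ‖z‖ < ε →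
      Real.log (K z - K0) + G (K z) = Real.log (‖z‖ ^ 2) + c) :
    Tendsto K (𝓝[≠] (0 : ℂ)) (𝓝 K0) ∧
      Tendsto (fun z : ℂ => (K z - K0) / ‖z‖ ^ 2) (𝓝[≠] (0 : ℂ))
        (𝓝 (Real.exp (c - G K0))) ∧
      0 < Real.exp (c - G K0) := by
  have hdisk : ∀ᶠ z : ℂ in 𝓝[≠] 0, 0 < ‖z‖ ∧ ‖z‖ < ε :=
    (eventually_nhdsWithin_of_forall fun z hz => norm_pos_iff.2 hz).and
      (nhdsWithin_le_nhds (tendsto_norm_zero.eventually (eventually_lt_nhds hε)))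
  have hu : Tendsto (fun z : ℂ => ‖z‖ ^ 2) (𝓝[≠] 0) (𝓝 0) := by
    simpa using (tendsto_norm_zero.pow 2).mono_left nhdsWithin_le_nhds
  have hu₀ : ∀ᶠ z : ℂ in 𝓝[≠] 0, ‖z‖ ^ 2 ≠ 0 :=
    hdisk.mono fun z hz => pow_ne_zero 2 hz.1.ne'
  have hK : ∀ᶠ z : ℂ in 𝓝[≠] 0, K z ∈ Icc K0 (K0 + δ) :=
    hdisk.mono fun z hz => Ioo_subset_Icc_self (hmem z hz.1 hz.2)
  have hrel : ∀ᶠ z : ℂ in 𝓝[≠] 0, K z - K0 = ‖z‖ ^ 2 * Real.exp (c - G (K z)) :=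
    hdisk.mono fun z hz => Real.eq_mul_exp_sub_of_log_add_eq
      (sub_pos.2 (hmem z hz.1 hz.2).1) (pow_pos hz.1 2) (heq z hz.1 hz.2)
  exact ⟨tendsto_of_sub_eq_mul_exp hG hu hK hrel,
    tendsto_sub_div_of_sub_eq_mul_exp hG hu hu₀ hK hrel, Real.exp_pos _⟩

/-- If `K` on a punctured disk takes values in `(K0, K0 + δ)` and satisfies the
implicit equation `ln(K(z) - K0) + G(K(z)) = ln|z|² + c` with `G` continuous on
`[K0, K0 + δ]`, then `K(z) → K0` and `(K(z) - K0)/|z|² → exp(c - G(K0)) > 0`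
as `z → 0`. -/
theorem exceptional_germ_fifth_invariant_exists (K0 δ : ℝ) (hδ : 0 < δ)
    (G : ℝ → ℝ) (hG : ContinuousOn G (Set.Icc K0 (K0 + δ)))
    (c : ℝ) (ε : ℝ) (hε : 0 < ε) (K : ℂ → ℝ)
    (hmem : ∀ z : ℂ, 0 < ‖z‖ → ‖z‖ < ε →
      K z ∈ Set.Ioo K0 (K0 + δ))
    (heq : ∀ z : ℂ, 0 < ‖z‖ → ‖z‖ < ε →
      Real.log (K z - K0) + G (K z) = Real.log (‖z‖ ^ 2) + c) :
    Tendsto K (𝓝[≠] (0 : ℂ)) (𝓝 K0) ∧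
      Tendsto (fun z : ℂ => (K z - K0) / ‖z‖ ^ 2) (𝓝[≠] (0 : ℂ))
        (𝓝 (Real.exp (c - G K0))) ∧
      0 < Real.exp (c - G K0) :=
  exceptional_germ_fifth_invariant_exists_general K0 δ G hG c ε hε K hmem heq
end

section
/- Let K0 ∈ ℝ, δ > 0, let G : [K0, K0 + δ] → ℝ be continuous and such that the function t ↦ ln(t - K0) + G(t) is strictly monotone increasing on (K0, K0 + δ). Let c1, c2 ∈ ℝ, ε > 0, and let K1, K2 : {z ∈ ℂ : 0 < |z| < ε} → (K0, K0 + δ) satisfy ln(Ki(z) - K0) + G(Ki(z)) = ln(|z|^2) + ci for all 0 < |z| < ε and i = 1, 2. If lim_{z→0} (K1(z) - K0)/|z|^2 = lim_{z→0} (K2(z) - K0)/|z|^2, then c1 = c2 and K1(z) = K2(z) for all z with 0 < |z| < ε. -/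
open Filter Topology

theorem Real.div_eq_exp_sub_of_log_add_eq {a b g c : ℝ} (ha : 0 < a) (hb : 0 < b)
    (h : Real.log a + g = Real.log b + c) : a / b = Real.exp (c - g) := by
  rw [show c - g = Real.log a - Real.log b by linarith, Real.exp_sub, Real.exp_log ha,
    Real.exp_log hb]

theorem Filter.Tendsto.of_sub_div {α : Type*} {L : Filter α} {f r : α → ℝ} {x₀ l : ℝ}
    (hf : Tendsto (fun x => (f x - x₀) / r x) L (𝓝 l)) (hr : Tendsto r L (𝓝 0))
    (hr0 : ∀ᶠ x in L, r x ≠ 0) : Tendsto f L (𝓝 x₀) := by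
  have hsub : Tendsto (fun x => (f x - x₀) / r x * r x + x₀) L (𝓝 (l * 0 + x₀)) :=
    (hf.mul hr).add_const x₀
  rw [mul_zero, zero_add] at hsub
  refine hsub.congr' ?_
  filter_upwards [hr0] with x hx
  rw [div_mul_cancel₀ _ hx, sub_add_cancel]

/-- If `log (K - K₀) + G (K) = log r + c` with `r → 0`, then `(K - K₀) / r = exp (c - G (K))`
and `K → K₀`, so the limit of `(K - K₀) / r` can only be `exp (c - G K₀)`. -/
theorem eq_exp_of_tendsto_sub_div_of_log_add_eq {α : Type*} {L : Filter α} [L.NeBot]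
    {K r : α → ℝ} {G : ℝ → ℝ} {s : Set ℝ} {K₀ c l : ℝ}
    (hG : ContinuousWithinAt G s K₀) (hr : Tendsto r L (𝓝 0)) (hr0 : ∀ᶠ x in L, 0 < r x)
    (hK : ∀ᶠ x in L, K x ∈ s ∧ K₀ < K x)
    (heq : ∀ᶠ x in L, Real.log (K x - K₀) + G (K x) = Real.log (r x) + c)
    (hlim : Tendsto (fun x => (K x - K₀) / r x) L (𝓝 l)) : l = Real.exp (c - G K₀) := by
  have hquot : ∀ᶠ x in L, Real.exp (c - G (K x)) = (K x - K₀) / r x := by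
    filter_upwards [hr0, hK, heq] with x hrx hKx hx
    exact (Real.div_eq_exp_sub_of_log_add_eq (sub_pos.2 hKx.2) hrx hx).symm
  have hK₀ : Tendsto K L (𝓝[s] K₀) :=
    tendsto_nhdsWithin_iff.2 ⟨hlim.of_sub_div hr (hr0.mono fun _ h => h.ne'),
      hK.mono fun _ h => h.1⟩
  have hexp : Tendsto (fun x => Real.exp (c - G (K x))) L (𝓝 (Real.exp (c - G K₀))) :=
    (Real.continuous_exp.tendsto _).comp (tendsto_const_nhds.sub (hG.tendsto.comp hK₀))
  exact tendsto_nhds_unique hlim (hexp.congr' hquot)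

theorem eventually_nhdsNE_zero_of_forall_punctured_ball {E : Type*} [NormedAddCommGroup E]
    {ε : ℝ} (hε : 0 < ε) {p : E → Prop} (h : ∀ z : E, 0 < ‖z‖ → ‖z‖ < ε → p z) :
    ∀ᶠ z in 𝓝[≠] 0, p z := by
  filter_upwards [nhdsWithin_le_nhds (Metric.ball_mem_nhds (0 : E) hε), self_mem_nhdsWithin]
    with z hball hz
  exact h z (norm_pos_iff.2 hz) (mem_ball_zero_iff.1 hball)

/-- The fifth invariant determines the exceptional germ uniquely: if `K1, K2` on a
punctured disk satisfy `ln(Ki(z) - K0) + G(Ki(z)) = ln|z|² + ci` with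
`t ↦ ln(t - K0) + G(t)` strictly increasing on `(K0, K0 + δ)`, and the limits
`lim_{z→0} (Ki(z) - K0)/|z|²` exist and coincide, then `c1 = c2` and `K1 = K2`. -/
theorem fifth_invariant_determines_germ (K0 δ : ℝ) (hδ : 0 < δ)
    (G : ℝ → ℝ) (hG : ContinuousOn G (Set.Icc K0 (K0 + δ)))
    (hmono : StrictMonoOn (fun t : ℝ => Real.log (t - K0) + G t)
      (Set.Ioo K0 (K0 + δ)))
    (c₁ c₂ : ℝ) (ε : ℝ) (hε : 0 < ε) (K₁ K₂ : ℂ → ℝ)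
    (hmem₁ : ∀ z : ℂ, 0 < ‖z‖ → ‖z‖ < ε →
      K₁ z ∈ Set.Ioo K0 (K0 + δ))
    (hmem₂ : ∀ z : ℂ, 0 < ‖z‖ → ‖z‖ < ε →
      K₂ z ∈ Set.Ioo K0 (K0 + δ))
    (heq₁ : ∀ z : ℂ, 0 < ‖z‖ → ‖z‖ < ε →
      Real.log (K₁ z - K0) + G (K₁ z) = Real.log (‖z‖ ^ 2) + c₁)
    (heq₂ : ∀ z : ℂ, 0 < ‖z‖ → ‖z‖ < ε →
      Real.log (K₂ z - K0) + G (K₂ z) = Real.log (‖z‖ ^ 2) + c₂)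
    (l : ℝ)
    (hlim₁ : Tendsto (fun z : ℂ => (K₁ z - K0) / ‖z‖ ^ 2)
      (𝓝[≠] (0 : ℂ)) (𝓝 l))
    (hlim₂ : Tendsto (fun z : ℂ => (K₂ z - K0) / ‖z‖ ^ 2)
      (𝓝[≠] (0 : ℂ)) (𝓝 l)) :
    c₁ = c₂ ∧
      ∀ z : ℂ, 0 < ‖z‖ → ‖z‖ < ε → K₁ z = K₂ z := by
  have hG₀ : ContinuousWithinAt G (Set.Icc K0 (K0 + δ)) K0 := hG K0 ⟨le_rfl, by linarith⟩
  have hr : Tendsto (fun z : ℂ => ‖z‖ ^ 2) (𝓝[≠] 0) (𝓝 0) := by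
    simpa using (tendsto_norm_zero.pow 2).mono_left (nhdsWithin_le_nhds (s := {(0 : ℂ)}ᶜ))
  have hr0 : ∀ᶠ z : ℂ in 𝓝[≠] 0, 0 < ‖z‖ ^ 2 :=
    eventually_nhdsNE_zero_of_forall_punctured_ball hε fun z hz _ => by positivity
  have hl₁ := eq_exp_of_tendsto_sub_div_of_log_add_eq hG₀ hr hr0
    (eventually_nhdsNE_zero_of_forall_punctured_ball hε fun z h0 h1 =>
      ⟨Set.Ioo_subset_Icc_self (hmem₁ z h0 h1), (hmem₁ z h0 h1).1⟩)
    (eventually_nhdsNE_zero_of_forall_punctured_ball hε heq₁) hlim₁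
  have hl₂ := eq_exp_of_tendsto_sub_div_of_log_add_eq hG₀ hr hr0
    (eventually_nhdsNE_zero_of_forall_punctured_ball hε fun z h0 h1 =>
      ⟨Set.Ioo_subset_Icc_self (hmem₂ z h0 h1), (hmem₂ z h0 h1).1⟩)
    (eventually_nhdsNE_zero_of_forall_punctured_ball hε heq₂) hlim₂
  have hc : c₁ = c₂ := by simpa using hl₁.symm.trans hl₂
  refine ⟨hc, fun z h0 h1 => hmono.injOn (hmem₁ z h0 h1) (hmem₂ z h0 h1) ?_⟩
  simp only [heq₁ z h0 h1, heq₂ z h0 h1, hc]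
end
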